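/- arXiv:2406.05986 — 3 statements merged into one kernel-verified Lean document; each statement's English description precedes it below -/
import Mathlib

section
/- Let m ≥ 1, let p ∈ ℝ^m be a probability mass function on {1,...,m}, and let θ_1 < θ_2 < ... < θ_m be distinct real numbers. Then for every ε > 0 there exists a one-hidden-layer ReLU network v : ℝ → ℝ (i.e., there exist H ∈ ℕ and parameters c, w, b ∈ ℝ^H, d ∈ ℝ with v(θ) = d + Σ_{k=1}^H c_k · max(0, w_k θ + b_k)) such that the vector g ∈ ℝ^m defined by g_j = exp(v(θ_j)) / Σ_{k=1}^m exp(v(θ_k)) satisfies max_{1 ≤ j ≤ m} |g_j − p_j| < ε. -/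
/-!
A one-hidden-layer ReLU network can interpolate any values at finitely many points: adding the
points in increasing order, each new point is fitted by one extra unit `c * max 0 (t - b)` whose
kink `b` lies between the old points and the new one, so the old values are untouched.
Interpolating `log (p j + δ)` at the `θ j` makes the softmax equal to `(p j + δ) / (1 + m δ)`,
which is within `(m + 1) δ` of `p j`.
-/

open Finset

/-- `v : ℝ → ℝ` is a one-hidden-layer ReLU network: there exist `H ∈ ℕ` and
parameters `c, w, b ∈ ℝ^H`, `d ∈ ℝ` with `v θ = d + ∑ k, c k * max 0 (w k * θ + b k)`. -/
def IsOneHiddenLayerReLUNet (v : ℝ → ℝ) : Prop :=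
  ∃ (H : ℕ) (c w b : Fin H → ℝ) (d : ℝ),
    ∀ t : ℝ, v t = d + ∑ k, c k * max 0 (w k * t + b k)

namespace IsOneHiddenLayerReLUNet

lemma const (d : ℝ) : IsOneHiddenLayerReLUNet fun _ => d :=
  ⟨0, Fin.elim0, Fin.elim0, Fin.elim0, d, fun t => by simp⟩

lemma add_relu {v : ℝ → ℝ} (hv : IsOneHiddenLayerReLUNet v) (c w b : ℝ) :
    IsOneHiddenLayerReLUNet fun t => v t + c * max 0 (w * t + b) := by
  obtain ⟨H, cs, ws, bs, d, hd⟩ := hv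
  refine ⟨H + 1, Fin.snoc cs c, Fin.snoc ws w, Fin.snoc bs b, d, fun t => ?_⟩
  simp [Fin.sum_univ_castSucc, hd t, add_assoc]

end IsOneHiddenLayerReLUNet

lemma Finset.exists_lt_forall_le_of_forall_lt {s : Finset ℝ} {a : ℝ} (hs : ∀ x ∈ s, x < a) :
    ∃ b < a, ∀ x ∈ s, x ≤ b := by
  rcases s.eq_empty_or_nonempty with rfl | hne
  · exact ⟨a - 1, by linarith, by simp⟩
  · exact ⟨s.max' hne, (s.max'_lt_iff hne).2 hs, fun x hx => s.le_max' x hx⟩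

lemma exists_reluNet_eqOn (s : Finset ℝ) (f : ℝ → ℝ) :
    ∃ v, IsOneHiddenLayerReLUNet v ∧ Set.EqOn v f s := by
  induction s using Finset.induction_on_max with
  | empty => exact ⟨0, IsOneHiddenLayerReLUNet.const 0, by simp⟩
  | insert a s hlt ih =>
    obtain ⟨v, hv, hvf⟩ := ih
    obtain ⟨b, hba, hsb⟩ := Finset.exists_lt_forall_le_of_forall_lt hlt
    set c := (f a - v a) / (a - b)
    refine ⟨fun t => v t + c * max 0 (1 * t + -b), hv.add_relu c 1 (-b), ?_⟩
    intro x hx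
    rcases Finset.mem_insert.1 hx with rfl | hx
    · have hab : 0 < x - b := by linarith
      simp only [one_mul, ← sub_eq_add_neg, max_eq_right hab.le, c]
      field_simp
      ring
    · have hxb : x + -b ≤ 0 := by linarith [hsb x hx]
      simp only [one_mul, max_eq_left hxb, mul_zero, add_zero]
      exact hvf hx

lemma abs_add_div_one_add_mul_sub_le {a δ n : ℝ} (ha₀ : 0 ≤ a) (ha₁ : a ≤ 1) (hδ : 0 ≤ δ)
    (hn : 0 ≤ n) : |(a + δ) / (1 + n * δ) - a| ≤ (n + 1) * δ := by
  have hpos : 0 < 1 + n * δ := by positivity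
  have hnum : |δ * (1 - n * a)| ≤ (n + 1) * δ := by
    rw [abs_mul, abs_of_nonneg hδ, mul_comm]
    gcongr
    rw [abs_le]
    constructor <;> nlinarith
  calc |(a + δ) / (1 + n * δ) - a| = |δ * (1 - n * a)| / (1 + n * δ) := by
        rw [← abs_of_pos hpos, ← abs_div, abs_of_pos hpos]
        congr 1
        field_simp
        ring
    _ ≤ |δ * (1 - n * a)| := div_le_self (abs_nonneg _) (by nlinarith)
    _ ≤ (n + 1) * δ := hnum

theorem softmax_relu_net_approximates_pmf_general
    (m : ℕ) (p : Fin m → ℝ)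
    (hp0 : ∀ j, 0 ≤ p j) (hp1 : ∑ j, p j = 1)
    (θ : Fin m → ℝ) (hθ : StrictMono θ)
    (ε : ℝ) (hε : 0 < ε) :
    ∃ v : ℝ → ℝ, IsOneHiddenLayerReLUNet v ∧
      ∀ j : Fin m,
        |Real.exp (v (θ j)) / (∑ k : Fin m, Real.exp (v (θ k))) - p j| < ε := by
  set δ : ℝ := ε / (m + 2)
  have hδ : 0 < δ := by positivity
  have hδε : (m + 1) * δ < ε := by
    rw [mul_div_assoc', div_lt_iff₀ (by positivity)]
    linarith
  obtain ⟨v, hv, hvθ⟩ := exists_reluNet_eqOn (univ.image θ)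
    (Function.extend θ (fun j => Real.log (p j + δ)) 0)
  have hexp (j : Fin m) : Real.exp (v (θ j)) = p j + δ := by
    rw [hvθ (mem_image_of_mem θ (mem_univ j)), hθ.injective.extend_apply,
      Real.exp_log (by linarith [hp0 j])]
  have hsum : ∑ k, Real.exp (v (θ k)) = 1 + m * δ := by
    simp [hexp, sum_add_distrib, hp1]
  refine ⟨v, hv, fun j => ?_⟩
  rw [hexp, hsum]
  have hpj : p j ≤ 1 := hp1 ▸ single_le_sum (fun i _ => hp0 i) (mem_univ j)
  exact (abs_add_div_one_add_mul_sub_le (hp0 j) hpj hδ.le m.cast_nonneg).trans_lt hδε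

/-- Theorem 1 of the paper: for any PMF `p` on `{θ_1 < ⋯ < θ_m}` and any `ε > 0`,
there is a one-hidden-layer ReLU network `v` such that the softmax of the values
`v (θ j)` approximates `p` within `ε` in sup norm. -/
theorem softmax_relu_net_approximates_pmf
    (m : ℕ) (hm : 1 ≤ m) (p : Fin m → ℝ)
    (hp0 : ∀ j, 0 ≤ p j) (hp1 : ∑ j, p j = 1)
    (θ : Fin m → ℝ) (hθ : StrictMono θ)
    (ε : ℝ) (hε : 0 < ε) :
    ∃ v : ℝ → ℝ, IsOneHiddenLayerReLUNet v ∧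
      ∀ j : Fin m,
        |Real.exp (v (θ j)) / (∑ k : Fin m, Real.exp (v (θ k))) - p j| < ε :=
  softmax_relu_net_approximates_pmf_general m p hp0 hp1 θ hθ ε hε
end

section
/- Let m ≥ 1, let p ∈ ℝ^m be a probability mass function on {1,...,m}, and let ε > 0. Define h ∈ ℝ^m by h_j = log(2m·p_j/ε + 1) for j = 1,...,m. Then the softmax of h satisfies max_{1 ≤ k ≤ m} | σ(h)_k − p_k | ≤ m/(2m/ε + m), and moreover m/(2m/ε + m) < ε/2. -/
open Finset

/-- The bound on `Δ_2` in the proof of Theorem 1 of the paper: with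
`h j = log(2m·p j/ε + 1)`, the softmax of `h` is within `m/(2m/ε + m)` of `p`
in sup norm, and this bound is smaller than `ε/2`. -/
theorem softmax_log_shift_bound
    (m : ℕ) (hm : 1 ≤ m) (p : Fin m → ℝ)
    (hp0 : ∀ j, 0 ≤ p j) (hp1 : ∑ j, p j = 1)
    (ε : ℝ) (hε : 0 < ε) :
    (∀ k : Fin m,
        |Real.exp (Real.log (2 * (m : ℝ) * p k / ε + 1)) /
            (∑ j : Fin m, Real.exp (Real.log (2 * (m : ℝ) * p j / ε + 1))) - p k| ≤
          (m : ℝ) / (2 * (m : ℝ) / ε + (m : ℝ))) ∧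
      (m : ℝ) / (2 * (m : ℝ) / ε + (m : ℝ)) < ε / 2 := by
  have hm0 : (0 : ℝ) < m := by exact_mod_cast hm
  have hc : (0 : ℝ) < 2 * (m : ℝ) / ε := by positivity
  have hD : (0 : ℝ) < 2 * (m : ℝ) / ε + m := by linarith
  have hpos : ∀ j : Fin m, (0 : ℝ) < 2 * (m : ℝ) * p j / ε + 1 := by
    intro j
    have hj := hp0 j
    have : 0 ≤ 2 * (m : ℝ) * p j / ε := by positivity
    linarith
  have hexp : ∀ j : Fin m,
      Real.exp (Real.log (2 * (m : ℝ) * p j / ε + 1)) = 2 * (m : ℝ) * p j / ε + 1 :=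
    fun j => Real.exp_log (hpos j)
  have hsum : (∑ j : Fin m, Real.exp (Real.log (2 * (m : ℝ) * p j / ε + 1)))
      = 2 * (m : ℝ) / ε + m := by
    simp only [hexp]
    rw [Finset.sum_add_distrib]
    have : ∑ j : Fin m, 2 * (m : ℝ) * p j / ε = 2 * (m : ℝ) / ε := by
      rw [← Finset.sum_div, ← Finset.mul_sum, hp1, mul_one]
    simp [this]
  constructor
  · intro k
    rw [hexp, hsum]
    have hpk1 : p k ≤ 1 := by
      rw [← hp1]
      exact Finset.single_le_sum (fun j _ => hp0 j) (Finset.mem_univ k)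
    have heq : (2 * (m : ℝ) * p k / ε + 1) / (2 * (m : ℝ) / ε + m) - p k
        = (1 - m * p k) / (2 * (m : ℝ) / ε + m) := by
      field_simp
      ring
    rw [heq, abs_div, abs_of_pos hD, div_le_div_iff_of_pos_right hD]
    rw [abs_le]
    constructor
    · nlinarith [hp0 k, mul_nonneg hm0.le (hp0 k)]
    · have hm1 : (1 : ℝ) ≤ m := by exact_mod_cast hm
      nlinarith [mul_nonneg hm0.le (hp0 k)]
  · rw [div_lt_iff₀ hD]
    have : ε / 2 * (2 * (m : ℝ) / ε) = m := by field_simp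
    nlinarith
end

section
/- Let n, m ≥ 1, let 0 < c_1 ≤ c_2 be real numbers, and let f_{ij} (1 ≤ i ≤ n, 1 ≤ j ≤ m) be real numbers with 0 ≤ f_{ij} ≤ c_2 for all i, j. Let π^{(1)} and π^{(2)} be PMFs on {1,...,m} such that L_i(π^{(1)}) ≥ c_1 and L_i(π^{(2)}) ≥ c_1 for every i = 1,...,n, where L_i(π) = Σ_{j=1}^m f_{ij} π_j. Then | ℓ(π^{(1)}) − ℓ(π^{(2)}) | ≤ (m·c_2/c_1) · max_{1 ≤ j ≤ m} | π^{(1)}_j − π^{(2)}_j |, where ℓ(π) = −(1/n) Σ_{i=1}^n log L_i(π). -/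
open Finset

/-- The mixture log-likelihood loss `ℓ(π) = −(1/n) Σ_i log( Σ_j f i j * π j )`. -/
noncomputable def mixLoss {n m : ℕ} (f : Fin n → Fin m → ℝ) (π : Fin m → ℝ) : ℝ :=
  -(1 / (n : ℝ)) * ∑ i, Real.log (∑ j, f i j * π j)

lemma log_abs_sub_le {c a b : ℝ} (hc : 0 < c) (ha : c ≤ a) (hb : c ≤ b) :
    |Real.log a - Real.log b| ≤ |a - b| / c := by
  have key : ∀ x y : ℝ, c ≤ x → c ≤ y → x ≤ y →
      Real.log y - Real.log x ≤ (y - x) / c := by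
    intro x y hx hy hxy
    have hx0 : 0 < x := lt_of_lt_of_le hc hx
    have hy0 : 0 < y := lt_of_lt_of_le hc hy
    have h1 : Real.log y - Real.log x = Real.log (y / x) := by
      rw [Real.log_div (ne_of_gt hy0) (ne_of_gt hx0)]
    have h2 : Real.log (y / x) ≤ y / x - 1 :=
      Real.log_le_sub_one_of_pos (div_pos hy0 hx0)
    have h3 : y / x - 1 = (y - x) / x := by field_simp
    have h4 : (y - x) / x ≤ (y - x) / c :=
      div_le_div_of_nonneg_left (by linarith) hc hx
    linarith
  rcases le_total a b with h | h
  · rw [abs_sub_comm (Real.log a), abs_sub_comm a b,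
      abs_of_nonneg (sub_nonneg.mpr h),
      abs_of_nonneg (sub_nonneg.mpr (Real.log_le_log (lt_of_lt_of_le hc ha) h))]
    exact key a b ha hb h
  · rw [abs_of_nonneg (sub_nonneg.mpr h),
      abs_of_nonneg (sub_nonneg.mpr (Real.log_le_log (lt_of_lt_of_le hc hb) h))]
    exact key b a hb ha h

/-- Quantitative stability bound for the mixture log-likelihood loss
(the chain of inequalities in the proof of Theorem 2 of the paper). -/
theorem mixLoss_stability
    (n m : ℕ) (hn : 1 ≤ n) (hm : 1 ≤ m)
    (c₁ c₂ : ℝ) (hc₁ : 0 < c₁) (hc₁₂ : c₁ ≤ c₂)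
    (f : Fin n → Fin m → ℝ) (hf0 : ∀ i j, 0 ≤ f i j) (hf2 : ∀ i j, f i j ≤ c₂)
    (π₁ π₂ : Fin m → ℝ)
    (hπ₁0 : ∀ j, 0 ≤ π₁ j) (hπ₁1 : ∑ j, π₁ j = 1)
    (hπ₂0 : ∀ j, 0 ≤ π₂ j) (hπ₂1 : ∑ j, π₂ j = 1)
    (hL₁ : ∀ i : Fin n, c₁ ≤ ∑ j, f i j * π₁ j)
    (hL₂ : ∀ i : Fin n, c₁ ≤ ∑ j, f i j * π₂ j) :
    |mixLoss f π₁ - mixLoss f π₂| ≤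
      ((m : ℝ) * c₂ / c₁) * ⨆ j : Fin m, |π₁ j - π₂ j| := by
  have hmne : Nonempty (Fin m) := ⟨⟨0, hm⟩⟩
  set M := ⨆ j : Fin m, |π₁ j - π₂ j| with hMdef
  have hbdd : BddAbove (Set.range fun j : Fin m => |π₁ j - π₂ j|) :=
    Set.Finite.bddAbove (Set.finite_range _)
  have hM : ∀ j, |π₁ j - π₂ j| ≤ M := fun j => le_ciSup hbdd j
  have hM0 : 0 ≤ M := le_trans (abs_nonneg _) (hM (Classical.arbitrary _))
  set B := (m : ℝ) * c₂ / c₁ * M with hBdef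
  have hn0 : (0:ℝ) < n := by exact_mod_cast hn
  -- per-i bound
  have key : ∀ i : Fin n,
      |Real.log (∑ j, f i j * π₁ j) - Real.log (∑ j, f i j * π₂ j)| ≤ B := by
    intro i
    have h1 : |Real.log (∑ j, f i j * π₁ j) - Real.log (∑ j, f i j * π₂ j)| ≤
        |(∑ j, f i j * π₁ j) - (∑ j, f i j * π₂ j)| / c₁ :=
      log_abs_sub_le hc₁ (hL₁ i) (hL₂ i)
    have h2 : |(∑ j, f i j * π₁ j) - (∑ j, f i j * π₂ j)| ≤ (m : ℝ) * c₂ * M := by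
      rw [← Finset.sum_sub_distrib]
      calc |∑ j, (f i j * π₁ j - f i j * π₂ j)|
          ≤ ∑ j, |f i j * π₁ j - f i j * π₂ j| := Finset.abs_sum_le_sum_abs _ _
        _ ≤ ∑ _j : Fin m, c₂ * M := by
            apply Finset.sum_le_sum
            intro j _
            rw [← mul_sub, abs_mul, abs_of_nonneg (hf0 i j)]
            exact mul_le_mul (hf2 i j) (hM j) (abs_nonneg _)
              (le_trans hc₁.le hc₁₂)
        _ = (m : ℝ) * c₂ * M := by
            rw [Finset.sum_const, Finset.card_univ, Fintype.card_fin, nsmul_eq_mul]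
            ring
    calc |Real.log (∑ j, f i j * π₁ j) - Real.log (∑ j, f i j * π₂ j)|
        ≤ |(∑ j, f i j * π₁ j) - (∑ j, f i j * π₂ j)| / c₁ := h1
      _ ≤ (m : ℝ) * c₂ * M / c₁ := by gcongr
      _ = B := by rw [hBdef]; ring
  have hdiff : mixLoss f π₁ - mixLoss f π₂ =
      (1 / (n : ℝ)) * ∑ i, (Real.log (∑ j, f i j * π₂ j) - Real.log (∑ j, f i j * π₁ j)) := by
    simp only [mixLoss, Finset.sum_sub_distrib]
    ring
  rw [hdiff, abs_mul, abs_of_nonneg (by positivity : (0:ℝ) ≤ 1 / (n:ℝ))]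
  calc 1 / (n:ℝ) * |∑ i, (Real.log (∑ j, f i j * π₂ j) - Real.log (∑ j, f i j * π₁ j))|
      ≤ 1 / (n:ℝ) * ∑ i : Fin n, B := by
        apply mul_le_mul_of_nonneg_left _ (by positivity)
        refine le_trans (Finset.abs_sum_le_sum_abs _ _) (Finset.sum_le_sum ?_)
        intro i _
        rw [abs_sub_comm]
        exact key i
    _ = B := by
        rw [Finset.sum_const, Finset.card_univ, Fintype.card_fin, nsmul_eq_mul]
        field_simp
end
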